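/- For n ∈ {3, 4}, there exist four completely independent spanning trees in the Cartesian product K_7 □ C_n of the complete graph on 7 vertices and the cycle on n vertices. -/

import Mathlib

open SimpleGraph

/-- The degree of the vertex `v` in the graph `T`, as the cardinality of its
neighbor set. -/
noncomputable def degN {V : Type*} (T : SimpleGraph V) (v : V) : ℕ :=
  (T.neighborSet v).ncard

/-- `T` is a spanning tree of `G`: a subgraph of `G` (on the same vertex set)
which is a tree. -/
def IsSpanningTreeOf {V : Type*} (G T : SimpleGraph V) : Prop :=
  T ≤ G ∧ T.IsTree

/-- The set of inner (non-leaf) vertices of `T`. -/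
def inn {V : Type*} (T : SimpleGraph V) : Set V :=
  {v | 2 ≤ degN T v}

/-- `T 0, …, T (r-1)` are completely independent spanning trees of `G`:
pairwise edge-disjoint spanning trees of `G` such that every vertex has degree
greater than `1` in at most one of them. -/
def AreCISTs {V : Type*} {r : ℕ} (G : SimpleGraph V) (T : Fin r → SimpleGraph V) : Prop :=
  (∀ i, IsSpanningTreeOf G (T i)) ∧
  (∀ i j, i ≠ j → Disjoint ((T i).edgeSet) ((T j).edgeSet)) ∧
  (∀ v : V, ∀ i j, 1 < degN (T i) v → 1 < degN (T j) v → i = j)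

/-- `G` is `d`-regular: every vertex has degree `d`. -/
def IsRegularDeg {V : Type*} (G : SimpleGraph V) (d : ℕ) : Prop :=
  ∀ v, degN G v = d

/-- The set of lost edges: edges of `G` belonging to none of the trees `T i`. -/
def lostEdges {V : Type*} {r : ℕ} (G : SimpleGraph V) (T : Fin r → SimpleGraph V) :
    Set (Sym2 V) :=
  G.edgeSet \ ⋃ i, (T i).edgeSet

/-- `E^l_T`: the set of edges of `G` having both endpoints inner vertices of `T`
and which are not edges of `T`. -/
def lostAt {V : Type*} (G T : SimpleGraph V) : Set (Sym2 V) :=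
  {e | e ∈ G.edgeSet ∧ (∀ v ∈ e, v ∈ inn T) ∧ e ∉ T.edgeSet}

/-- The potential extra degree of a spanning tree `T` of a `2r`-regular graph of
order `n`: `ped(T) = |inn(T)|·r − n + 2` (as an integer). -/
noncomputable def ped {V : Type*} (n r : ℕ) (T : SimpleGraph V) : ℤ :=
  ((inn T).ncard : ℤ) * r - n + 2


/-!
Each of the four trees is described by a parent map on the vertices of `K_7 □ C_n` whose
`7n`-th iterate is constant. Such a map always yields a tree: every vertex is joined to the
common endpoint of its iterates, and an edge `s(v, f v)` is a bridge since the descendants of `v`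
are closed under all other edges and, `f` having no cycle but the root, do not contain `f v`.
What remains (parent edges lie in `K_7 □ C_n`, the trees are edge-disjoint, no vertex is inner
in two trees) is a finite check on the parent tables.
-/

namespace SimpleGraph

variable {V : Type*}

instance {W : Type*} [DecidableEq V] [DecidableEq W] (G : SimpleGraph V) (H : SimpleGraph W)
    [DecidableRel G.Adj] [DecidableRel H.Adj] : DecidableRel (G □ H).Adj :=
  fun _ _ => decidable_of_iff _ boxProd_adj.symm

def parentGraph (f : V → V) : SimpleGraph V :=
  fromRel fun u v => f u = v

section parentGraph

variable (f : V → V)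

lemma parentGraph_adj {u v : V} : (parentGraph f).Adj u v ↔ u ≠ v ∧ (f u = v ∨ f v = u) :=
  fromRel_adj _ u v

instance [DecidableEq V] : DecidableRel (parentGraph f).Adj :=
  fun _ _ => decidable_of_iff _ (parentGraph_adj f).symm

lemma reachable_parentGraph_iterate (k : ℕ) (v : V) : (parentGraph f).Reachable v (f^[k] v) := by
  induction k generalizing v with
  | zero => rfl
  | succ k ih =>
    rw [Function.iterate_succ_apply]
    refine Reachable.trans ?_ (ih (f v))
    by_cases h : v = f v
    · rw [← h]
    · exact ((parentGraph_adj f).2 ⟨h, Or.inl rfl⟩).reachable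

lemma parentGraph_le {G : SimpleGraph V} (h : ∀ v, f v ≠ v → G.Adj v (f v)) :
    parentGraph f ≤ G := by
  intro u w huw
  obtain ⟨hne, rfl | rfl⟩ := (parentGraph_adj f).1 huw
  · exact h u hne.symm
  · exact (h w hne).symm

lemma disjoint_edgeSet_parentGraph {G : SimpleGraph V} (h : ∀ v, f v ≠ v → ¬ G.Adj v (f v)) :
    Disjoint (parentGraph f).edgeSet G.edgeSet := by
  rw [Set.disjoint_left]
  intro e
  induction e using Sym2.ind with | _ u w => ?_
  intro (huw : (parentGraph f).Adj u w)
  obtain ⟨hne, rfl | rfl⟩ := (parentGraph_adj f).1 huw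
  · exact h u hne.symm
  · exact fun hG => h w hne hG.symm

variable {f} {r : V} {N : ℕ} (hf : ∀ v, f^[N] v = r)
include hf

lemma connected_parentGraph : (parentGraph f).Connected := by
  have reach (v : V) : (parentGraph f).Reachable v r := hf v ▸ reachable_parentGraph_iterate f N v
  exact (connected_iff _).2 ⟨fun u v => (reach u).trans (reach v).symm, ⟨r⟩⟩

lemma apply_root_of_iterate_eq : f r = r := by
  have h := hf (f r)
  rwa [← Function.iterate_succ_apply, Function.iterate_succ_apply', hf] at h

lemma eq_root_of_isPeriodicPt {v : V} {k : ℕ} (hv : Function.IsPeriodicPt f (k + 1) v) : v = r := by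
  rw [← (hv.mul_const N).eq, Nat.succ_mul, Function.iterate_add_apply, hf,
    Function.iterate_fixed (apply_root_of_iterate_eq hf)]

lemma isBridge_parentGraph {v : V} (hv : f v ≠ v) : (parentGraph f).IsBridge s(v, f v) := by
  rw [isBridge_iff]
  rintro ⟨p⟩
  let S : Set V := {u | ∃ k, f^[k] u = v}
  have hfv : f v ∉ S := by
    rintro ⟨k, hk⟩
    have hper : Function.IsPeriodicPt f (k + 1) v := by
      rwa [Function.IsPeriodicPt, Function.IsFixedPt, Function.iterate_succ_apply]
    exact hv (eq_root_of_isPeriodicPt hf hper ▸ apply_root_of_iterate_eq hf)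
  obtain ⟨d, -, ⟨k, hk⟩, hd⟩ := p.exists_boundary_dart S ⟨0, rfl⟩ hfv
  obtain ⟨hadj, hne⟩ := (deleteEdges_adj ..).1 d.adj
  obtain ⟨-, h | h⟩ := (parentGraph_adj f).1 hadj
  · cases k with
    | zero => exact hne (by simp_all)
    | succ k => exact hd ⟨k, by rwa [← h, ← Function.iterate_succ_apply]⟩
  · exact hd ⟨k + 1, by rwa [Function.iterate_succ_apply, h]⟩

lemma isAcyclic_parentGraph : (parentGraph f).IsAcyclic := by
  rw [isAcyclic_iff_forall_adj_isBridge]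
  intro u w huw
  obtain ⟨hne, rfl | rfl⟩ := (parentGraph_adj f).1 huw
  · exact isBridge_parentGraph hf hne.symm
  · rw [Sym2.eq_swap]
    exact isBridge_parentGraph hf hne

theorem isTree_parentGraph : (parentGraph f).IsTree :=
  ⟨connected_parentGraph hf, isAcyclic_parentGraph hf⟩

end parentGraph

end SimpleGraph

lemma degN_eq_degree {V : Type*} (T : SimpleGraph V) (v : V) [Fintype (T.neighborSet v)] :
    degN T v = T.degree v := by
  rw [degN, Set.ncard_eq_toFinset_card']
  rfl

theorem areCISTs_parentGraph {V : Type*} [Fintype V] [DecidableEq V] {G : SimpleGraph V} {k : ℕ}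
    (f : Fin k → V → V) (root : Fin k → V) (N : ℕ)
    (hroot : ∀ i v, (f i)^[N] v = root i)
    (hle : ∀ i v, f i v ≠ v → G.Adj v (f i v))
    (hdisj : ∀ i j, i ≠ j → ∀ v, f i v ≠ v → ¬ (parentGraph (f j)).Adj v (f i v))
    (hinner : ∀ v i j, 1 < (parentGraph (f i)).degree v → 1 < (parentGraph (f j)).degree v →
      i = j) :
    AreCISTs G fun i => parentGraph (f i) := by
  refine ⟨fun i => ⟨parentGraph_le _ (hle i), isTree_parentGraph (hroot i)⟩,
    fun i j hij => disjoint_edgeSet_parentGraph _ (hdisj i j hij), fun v i j hi hj => ?_⟩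
  rw [degN_eq_degree] at hi hj
  exact hinner v i j hi hj

-- `parent3 i a b` is the parent of the vertex `(a, b)` in the `i`-th tree; the root is its own parent.
def parent3 : Fin 4 → Fin 7 → Fin 3 → Fin 7 × Fin 3 := ![
  ![![(0, 2), (0, 2), (5, 2)],
    ![(5, 0), (3, 1), (5, 2)],
    ![(6, 0), (3, 1), (5, 2)],
    ![(3, 1), (5, 1), (0, 2)],
    ![(5, 0), (5, 1), (0, 2)],
    ![(6, 0), (5, 2), (5, 0)],
    ![(6, 0), (6, 0), (6, 0)]],
  ![![(1, 0), (1, 1), (2, 2)],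
    ![(3, 0), (1, 0), (3, 2)],
    ![(1, 0), (2, 2), (3, 2)],
    ![(3, 0), (3, 2), (3, 0)],
    ![(3, 0), (1, 1), (2, 2)],
    ![(3, 0), (1, 1), (3, 2)],
    ![(1, 0), (1, 1), (2, 2)]],
  ![![(4, 0), (2, 1), (6, 2)],
    ![(4, 0), (2, 1), (6, 2)],
    ![(4, 0), (2, 0), (2, 0)],
    ![(2, 0), (6, 1), (6, 2)],
    ![(4, 0), (6, 1), (4, 0)],
    ![(2, 0), (2, 1), (6, 2)],
    ![(4, 0), (2, 1), (6, 1)]],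
  ![![(0, 1), (0, 1), (1, 2)],
    ![(1, 2), (1, 2), (4, 2)],
    ![(0, 0), (4, 1), (1, 2)],
    ![(0, 0), (4, 1), (4, 2)],
    ![(4, 1), (0, 1), (4, 1)],
    ![(0, 0), (0, 1), (4, 2)],
    ![(0, 0), (0, 1), (4, 2)]]]

lemma areCISTs_K7_C3 :
    AreCISTs ((⊤ : SimpleGraph (Fin 7)) □ cycleGraph 3) fun i =>
      parentGraph (Function.uncurry (parent3 i)) :=
  areCISTs_parentGraph _ ![(6, 0), (3, 0), (4, 0), (0, 1)] 21
    (by decide +kernel) (by decide +kernel) (by decide +kernel) (by decide +kernel)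

def parent4 : Fin 4 → Fin 7 → Fin 4 → Fin 7 × Fin 4 := ![
  ![![(0, 0), (1, 1), (0, 3), (0, 0)],
    ![(0, 0), (5, 1), (1, 1), (2, 3)],
    ![(2, 3), (5, 1), (0, 2), (0, 3)],
    ![(0, 0), (5, 1), (5, 2), (0, 3)],
    ![(0, 0), (1, 1), (0, 2), (2, 3)],
    ![(5, 1), (5, 2), (0, 2), (2, 3)],
    ![(0, 0), (1, 1), (0, 2), (0, 3)]],
  ![![(2, 0), (4, 1), (1, 2), (1, 3)],
    ![(1, 0), (1, 0), (1, 3), (1, 0)],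
    ![(1, 0), (2, 0), (4, 2), (3, 3)],
    ![(1, 0), (4, 1), (1, 2), (1, 3)],
    ![(2, 0), (4, 2), (1, 2), (1, 3)],
    ![(1, 0), (4, 1), (4, 2), (3, 3)],
    ![(2, 0), (4, 1), (4, 2), (3, 3)]],
  ![![(0, 1), (0, 1), (0, 1), (4, 3)],
    ![(4, 0), (3, 1), (6, 2), (6, 3)],
    ![(3, 0), (3, 1), (6, 2), (6, 3)],
    ![(3, 1), (0, 1), (3, 1), (3, 0)],
    ![(3, 0), (4, 0), (4, 3), (4, 0)],
    ![(4, 0), (0, 1), (6, 2), (6, 3)],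
    ![(3, 0), (6, 2), (6, 3), (4, 3)]],
  ![![(5, 0), (2, 1), (3, 2), (5, 3)],
    ![(6, 0), (2, 1), (2, 2), (5, 3)],
    ![(5, 0), (2, 1), (2, 1), (2, 2)],
    ![(5, 0), (6, 1), (2, 2), (3, 2)],
    ![(6, 0), (2, 1), (3, 2), (5, 3)],
    ![(6, 0), (6, 1), (2, 2), (5, 0)],
    ![(6, 1), (2, 1), (3, 2), (6, 0)]]]

lemma areCISTs_K7_C4 :
    AreCISTs ((⊤ : SimpleGraph (Fin 7)) □ cycleGraph 4) fun i =>
      parentGraph (Function.uncurry (parent4 i)) :=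
  areCISTs_parentGraph _ ![(0, 0), (1, 0), (0, 1), (2, 1)] 28
    (by decide +kernel) (by decide +kernel) (by decide +kernel) (by decide +kernel)

/-- For `n ∈ {3, 4}`, there exist four completely independent spanning trees in
`K_7 □ C_n`. -/
theorem stmt_16 (n : ℕ) (hn : n = 3 ∨ n = 4) :
    ∃ T : Fin 4 → SimpleGraph (Fin 7 × Fin n),
      AreCISTs ((⊤ : SimpleGraph (Fin 7)) □ cycleGraph n) T := by
  rcases hn with rfl | rfl
  · exact ⟨_, areCISTs_K7_C3⟩
  · exact ⟨_, areCISTs_K7_C4⟩
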